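/- arXiv:math/0501102 — 2 statements merged into one kernel-verified Lean document; each statement's English description precedes it below -/
import Mathlib

section
/- For every n ≥ 1, applying the operator ∏_{1 ≤ p, q ≤ n} (id + E_{k_q} Δ_{k_p}) (the product over ALL ordered pairs (p, q) with 1 ≤ p, q ≤ n, including p = q and p > q) to the polynomial ∏_{1 ≤ i < j ≤ n} (k_j − k_i)/(j − i) returns the same polynomial ∏_{1 ≤ i < j ≤ n} (k_j − k_i)/(j − i). -/
/-!
The operator `T = ∏_{p,q} (1 + E_q Δ_p)` is invariant under simultaneous permutation of the
variables, while `V = ∏_{i<j} (k_j - k_i)/(j - i)` is alternating; hence so is `T V - V`.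
The augmentation (sum of coefficients) of `T` is `1`, so `T - 1` is a combination of the
operators `E^a - 1`, each of which lowers the degree of every monomial; thus every monomial of
`T V - V` has degree `< deg V ≤ n(n-1)/2`. But the exponents of a monomial of an alternating
polynomial are pairwise distinct (a transposition fixing the monomial would negate its
coefficient), so its degree is `≥ 0 + 1 + ⋯ + (n-1)`. Hence `T V - V = 0`.
-/

open MvPolynomial Finset

/-- The shift of a polynomial by an integer vector `a`:
`(shiftPoly a p)(x₁,…,xₙ) = p(x₁ + a₁, …, xₙ + aₙ)`. -/
noncomputable def shiftPoly {n : ℕ} (a : Fin n → ℤ) (p : MvPolynomial (Fin n) ℚ) :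
    MvPolynomial (Fin n) ℚ :=
  aeval (fun j => X j + C ((a j : ℚ))) p

/-- A Laurent polynomial `Q` in the commuting shift operators `E₁,…,Eₙ` (an element of the
group algebra `ℚ[ℤⁿ]`, the exponent vector recording the shift) acts on polynomials. -/
noncomputable def opApply {n : ℕ} (Q : AddMonoidAlgebra ℚ (Fin n → ℤ))
    (p : MvPolynomial (Fin n) ℚ) : MvPolynomial (Fin n) ℚ :=
  Q.coeff.sum fun a c => c • shiftPoly a p

/-- The shift operator `E_{x_i}` as an element of the operator algebra. -/
noncomputable def Esh {n : ℕ} (i : Fin n) : AddMonoidAlgebra ℚ (Fin n → ℤ) :=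
  AddMonoidAlgebra.single (Pi.single i 1) 1

/-- The inverse shift operator `E_{x_i}⁻¹`. -/
noncomputable def EshInv {n : ℕ} (i : Fin n) : AddMonoidAlgebra ℚ (Fin n → ℤ) :=
  AddMonoidAlgebra.single (Pi.single i (-1)) 1

/-- The difference operator `Δ_{x_i} = E_{x_i} - id`. -/
noncomputable def Dlt {n : ℕ} (i : Fin n) : AddMonoidAlgebra ℚ (Fin n → ℤ) :=
  Esh i - 1

/-- All pairs `(p, q)` with `p < q`. -/
def pairs (n : ℕ) : Finset (Fin n × Fin n) :=
  Finset.univ.filter fun p => p.1 < p.2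

/-- The polynomial `∏_{1 ≤ i < j ≤ n} (x_j - x_i) / (j - i)`. -/
noncomputable def vandQ (n : ℕ) : MvPolynomial (Fin n) ℚ :=
  ∏ p ∈ pairs n, (C ((((p.2 : ℕ) : ℚ) - ((p.1 : ℕ) : ℚ))⁻¹) * (X p.2 - X p.1))

theorem Nat.choose_two_le_sum_of_injective {n : ℕ} {μ : Fin n → ℕ} (hμ : Function.Injective μ) :
    n.choose 2 ≤ ∑ i, μ i := by
  have hinj : Function.Injective fun i => (μ i : ℤ) := Nat.cast_injective.comp hμ
  have h := sum_range_le_sum (s := univ.image fun i => (μ i : ℤ)) (c := 0) (by simp)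
  rw [Finset.card_image_of_injective _ hinj, Finset.card_univ, Fintype.card_fin,
    Finset.sum_image fun i _ j _ h => hinj h] at h
  simp only [zero_add] at h
  rw [Nat.choose_two_right, ← sum_range_id, ← Nat.cast_le (α := ℤ)]
  push_cast
  exact h

namespace MvPolynomial

variable {σ τ R : Type*}

section CommSemiring

variable [CommSemiring R]

variable (σ R) in
noncomputable def degreeLT (d : ℕ) : Submodule R (MvPolynomial σ R) :=
  restrictSupport R {μ | μ.degree < d}

theorem mem_degreeLT {d : ℕ} {p : MvPolynomial σ R} :
    p ∈ degreeLT σ R d ↔ ∀ μ ∈ p.support, μ.degree < d :=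
  Iff.rfl

theorem degreeLT_mono {d e : ℕ} (h : d ≤ e) : degreeLT σ R d ≤ degreeLT σ R e :=
  restrictSupport_mono (R := R) fun _ hμ => lt_of_lt_of_le hμ h

theorem totalDegree_le_of_mem_degreeLT {d : ℕ} {p : MvPolynomial σ R} (hp : p ∈ degreeLT σ R d) :
    p.totalDegree ≤ d :=
  Finset.sup_le fun μ hμ => (mem_degreeLT.1 hp μ hμ).le

theorem mul_mem_degreeLT {a b : ℕ} {p q : MvPolynomial σ R} (hp : p.totalDegree ≤ a)
    (hq : q ∈ degreeLT σ R b) : p * q ∈ degreeLT σ R (a + b) := by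
  classical
  intro μ hμ
  obtain ⟨α, hα, β, hβ, rfl⟩ := Finset.mem_add.1 (support_mul p q hμ)
  have : α.degree ≤ a := (le_totalDegree hα).trans hp
  show (α + β).degree < a + b
  rw [map_add]
  exact add_lt_add_of_le_of_lt this (mem_degreeLT.1 hq β hβ)

noncomputable def shift (c : σ → R) : MvPolynomial σ R →ₐ[R] MvPolynomial σ R :=
  aeval fun i => X i + C (c i)

theorem rename_shift (e : σ ≃ τ) (c : σ → R) (p : MvPolynomial σ R) :
    rename e (shift c p) = shift (c ∘ e.symm) (rename e p) := by
  rw [← AlgHom.comp_apply, ← AlgHom.comp_apply]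
  congr 1
  refine algHom_ext fun i => ?_
  simp [shift]

end CommSemiring

section CommRing

variable [CommRing R]

theorem shift_monomial_add_sub_mem_degreeLT {c : σ → R} {m m' : σ →₀ ℕ}
    (hm : shift c (monomial m 1) - monomial m 1 ∈ degreeLT σ R m.degree)
    (hm' : shift c (monomial m' 1) - monomial m' 1 ∈ degreeLT σ R m'.degree) :
    shift c (monomial (m + m') 1) - monomial (m + m') 1 ∈ degreeLT σ R (m + m').degree := by
  set x : MvPolynomial σ R := monomial m 1
  set y : MvPolynomial σ R := monomial m' 1
  have hx : x.totalDegree ≤ m.degree := totalDegree_monomial_le m 1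
  have hy : y.totalDegree ≤ m'.degree := totalDegree_monomial_le m' 1
  have hTx : (shift c x).totalDegree ≤ m.degree := by
    rw [← add_sub_cancel x (shift c x)]
    exact (totalDegree_add _ _).trans (max_le hx (totalDegree_le_of_mem_degreeLT hm))
  have hxy : monomial (m + m') (1 : R) = x * y := by rw [monomial_mul, one_mul]
  have key : shift c (x * y) - x * y =
      shift c x * (shift c y - y) + y * (shift c x - x) := by
    rw [map_mul]; ring
  rw [hxy, key, map_add]
  refine add_mem (mul_mem_degreeLT hTx hm') ?_
  rw [add_comm]
  exact mul_mem_degreeLT hy hm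

theorem shift_monomial_sub_mem_degreeLT (c : σ → R) (m : σ →₀ ℕ) :
    shift c (monomial m 1) - monomial m 1 ∈ degreeLT σ R m.degree := by
  have hX (i : σ) : shift c (monomial (Finsupp.single i 1) 1) -
      monomial (Finsupp.single i 1) 1 ∈ degreeLT σ R (Finsupp.single i 1).degree := by
    rw [← X, shift, aeval_X, add_sub_cancel_left, Finsupp.degree_single, ← monomial_zero']
    refine mem_degreeLT.2 fun μ hμ => ?_
    rw [Finset.mem_singleton.1 (support_monomial_subset hμ)]
    simp
  have hsingle (i : σ) (k : ℕ) : shift c (monomial (Finsupp.single i k) 1) -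
      monomial (Finsupp.single i k) 1 ∈ degreeLT σ R (Finsupp.single i k).degree := by
    induction k with
    | zero => simp
    | succ k ih =>
      rw [Finsupp.single_add]
      exact shift_monomial_add_sub_mem_degreeLT ih (hX i)
  induction m using Finsupp.induction with
  | zero => simp
  | single_add i k m _ _ ih => exact shift_monomial_add_sub_mem_degreeLT (hsingle i k) ih

theorem shift_sub_mem_degreeLT (c : σ → R) (p : MvPolynomial σ R) :
    shift c p - p ∈ degreeLT σ R p.totalDegree := by
  have hsum : shift c p - p =
      ∑ m ∈ p.support, coeff m p • (shift c (monomial m 1) - monomial m 1) := by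
    conv_lhs => rw [p.as_sum]
    simp only [smul_sub, ← map_smul, smul_eq_mul, mul_one, map_sum,
      Finset.sum_sub_distrib]
  rw [hsum]
  exact Submodule.sum_mem _ fun m hm => Submodule.smul_mem _ _ <|
    degreeLT_mono (le_totalDegree hm) (shift_monomial_sub_mem_degreeLT c m)

end CommRing

section Alternating

variable [CommRing R] [NoZeroDivisors R] [CharZero R]

theorem injective_of_mem_support_of_rename_swap [DecidableEq σ] {D : MvPolynomial σ R}
    (hD : ∀ i j, i ≠ j → rename (Equiv.swap i j) D = -D) {μ : σ →₀ ℕ} (hμ : μ ∈ D.support) :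
    Function.Injective μ := by
  intro i j hij
  by_contra hne
  have hfix : Finsupp.mapDomain (Equiv.swap i j) μ = μ := by
    ext x
    rw [Finsupp.mapDomain_equiv_apply, Equiv.symm_swap, Equiv.swap_apply_def]
    split_ifs with hi hj
    · rw [hi, hij]
    · rw [hj, hij]
    · rfl
  have hcoeff : coeff μ D = -coeff μ D := by
    rw [← coeff_neg, ← hD i j hne, ← coeff_rename_mapDomain _ (Equiv.swap i j).injective, hfix]
  exact mem_support_iff.1 hμ (CharZero.eq_neg_self_iff.1 hcoeff)

theorem eq_zero_of_rename_swap_of_mem_degreeLT {n : ℕ} {D : MvPolynomial (Fin n) R}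
    (hD : ∀ i j, i ≠ j → rename (Equiv.swap i j) D = -D)
    (hdeg : D ∈ degreeLT (Fin n) R (n.choose 2)) : D = 0 := by
  refine support_eq_empty.1 (eq_empty_of_forall_notMem fun μ hμ => ?_)
  have hlow := Nat.choose_two_le_sum_of_injective (injective_of_mem_support_of_rename_swap hD hμ)
  rw [← Finsupp.degree_eq_sum] at hlow
  exact (mem_degreeLT.1 hdeg μ hμ).not_ge hlow

end Alternating

end MvPolynomial

section Operators

variable {n : ℕ}

theorem shiftPoly_eq_shift (a : Fin n → ℤ) : shiftPoly a = shift fun j => (a j : ℚ) :=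
  rfl

theorem opApply_zero (p : MvPolynomial (Fin n) ℚ) : opApply 0 p = 0 :=
  Finsupp.sum_zero_index

theorem opApply_add (Q Q' : AddMonoidAlgebra ℚ (Fin n → ℤ)) (p : MvPolynomial (Fin n) ℚ) :
    opApply (Q + Q') p = opApply Q p + opApply Q' p :=
  Finsupp.sum_add_index' (fun _ => zero_smul _ _) fun _ _ _ => add_smul _ _ _

theorem opApply_single (a : Fin n → ℤ) (c : ℚ) (p : MvPolynomial (Fin n) ℚ) :
    opApply (AddMonoidAlgebra.single a c) p = c • shiftPoly a p :=
  Finsupp.sum_single_index (zero_smul _ _)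

theorem opApply_neg (Q : AddMonoidAlgebra ℚ (Fin n → ℤ)) (p : MvPolynomial (Fin n) ℚ) :
    opApply Q (-p) = -opApply Q p := by
  simp only [opApply, shiftPoly, map_neg, smul_neg, Finsupp.sum_neg]

theorem opApply_sub_counit_smul_mem_degreeLT (Q : AddMonoidAlgebra ℚ (Fin n → ℤ))
    (p : MvPolynomial (Fin n) ℚ) :
    opApply Q p - Coalgebra.counit (R := ℚ) Q • p ∈ degreeLT (Fin n) ℚ p.totalDegree := by
  induction Q using AddMonoidAlgebra.induction_linear with
  | zero => simp [opApply_zero]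
  | add Q Q' hQ hQ' =>
    rw [opApply_add, map_add, add_smul, add_sub_add_comm]
    exact add_mem hQ hQ'
  | single a c =>
    rw [opApply_single, AddMonoidAlgebra.counit_single, CommSemiring.counit_apply, ← smul_sub]
    exact Submodule.smul_mem _ _ (shift_sub_mem_degreeLT _ p)

theorem counit_prod_one_add_Esh_mul_Dlt :
    Coalgebra.counit (R := ℚ) (∏ p : Fin n × Fin n, (1 + Esh p.2 * Dlt p.1)) = 1 := by
  rw [← Bialgebra.counitAlgHom_apply]
  simp [Dlt, Esh]

noncomputable def permuteShifts (σ : Equiv.Perm (Fin n)) :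
    AddMonoidAlgebra ℚ (Fin n → ℤ) ≃ₐ[ℚ] AddMonoidAlgebra ℚ (Fin n → ℤ) :=
  AddMonoidAlgebra.domCongr ℚ ℚ (AddEquiv.arrowCongr σ (AddEquiv.refl ℤ))

theorem opApply_permuteShifts_rename (σ : Equiv.Perm (Fin n))
    (Q : AddMonoidAlgebra ℚ (Fin n → ℤ)) (p : MvPolynomial (Fin n) ℚ) :
    opApply (permuteShifts σ Q) (rename σ p) = rename σ (opApply Q p) := by
  induction Q using AddMonoidAlgebra.induction_linear with
  | zero => simp [opApply_zero]
  | add Q Q' hQ hQ' => rw [map_add, opApply_add, opApply_add, hQ, hQ', map_add]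
  | single a c =>
    rw [permuteShifts, AddMonoidAlgebra.domCongr_single, opApply_single, opApply_single,
      map_smul, shiftPoly_eq_shift, shiftPoly_eq_shift, rename_shift]
    rfl

theorem permuteShifts_Esh (σ : Equiv.Perm (Fin n)) (i : Fin n) :
    permuteShifts σ (Esh i) = Esh (σ i) := by
  rw [permuteShifts, Esh, Esh, AddMonoidAlgebra.domCongr_single]
  congr 1
  exact Pi.single_comp_equiv σ.symm i 1

theorem permuteShifts_prod_one_add_Esh_mul_Dlt (σ : Equiv.Perm (Fin n)) :
    permuteShifts σ (∏ p : Fin n × Fin n, (1 + Esh p.2 * Dlt p.1)) =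
      ∏ p : Fin n × Fin n, (1 + Esh p.2 * Dlt p.1) := by
  simp only [map_prod, map_add, map_one, map_mul, Dlt, map_sub, permuteShifts_Esh]
  exact Fintype.prod_equiv (σ.prodCongr σ) _ _ fun _ => rfl

end Operators

section Vandermonde

variable {n : ℕ}

theorem prod_pairs {M : Type*} [CommMonoid M] (f : Fin n × Fin n → M) :
    ∏ p ∈ pairs n, f p = ∏ i, ∏ j ∈ Ioi i, f (i, j) := by
  rw [pairs, prod_filter, Fintype.prod_prod_type]
  simp_rw [← prod_filter, filter_lt_eq_Ioi]

theorem card_pairs : #(pairs n) = n.choose 2 := by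
  rw [pairs]
  simpa using Fintype.card_product_filter_lt (α := Fin n)

theorem vandQ_eq_C_mul_det :
    vandQ n = C (∏ p ∈ pairs n, (((p.2 : ℕ) : ℚ) - ((p.1 : ℕ) : ℚ))⁻¹) *
      (Matrix.vandermonde fun i => (X i : MvPolynomial (Fin n) ℚ)).det := by
  rw [vandQ, prod_mul_distrib, map_prod, Matrix.det_vandermonde,
    prod_pairs fun p => (X p.2 - X p.1 : MvPolynomial (Fin n) ℚ)]

theorem rename_vandQ (σ : Equiv.Perm (Fin n)) :
    rename σ (vandQ n) = (Equiv.Perm.sign σ : ℤ) • vandQ n := by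
  have hperm : (rename σ).mapMatrix (Matrix.vandermonde fun i => (X i : MvPolynomial (Fin n) ℚ)) =
      (Matrix.vandermonde fun i => X i).submatrix σ id := by
    ext i j
    simp [Matrix.vandermonde]
  rw [vandQ_eq_C_mul_det, map_mul, rename_C, AlgHom.map_det, hperm, Matrix.det_permute,
    zsmul_eq_mul]
  ring

theorem totalDegree_vandQ_le : (vandQ n).totalDegree ≤ n.choose 2 := by
  rw [vandQ, ← card_pairs, card_eq_sum_ones]
  refine (totalDegree_finsetProd _ _).trans (sum_le_sum fun p _ => ?_)
  refine (totalDegree_mul _ _).trans ?_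
  rw [totalDegree_C, zero_add]
  refine (totalDegree_sub _ _).trans (max_le ?_ ?_) <;>
    exact (totalDegree_monomial_le _ _).trans (by simp)

end Vandermonde

theorem full_operator_product_fixes_vandermonde_general (n : ℕ) :
    opApply (∏ p ∈ (Finset.univ : Finset (Fin n × Fin n)), (1 + Esh p.2 * Dlt p.1))
        (vandQ n) = vandQ n := by
  set T := ∏ p ∈ (Finset.univ : Finset (Fin n × Fin n)), (1 + Esh p.2 * Dlt p.1)
  have hlow : opApply T (vandQ n) - vandQ n ∈ degreeLT (Fin n) ℚ (n.choose 2) := by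
    have h := opApply_sub_counit_smul_mem_degreeLT T (vandQ n)
    rw [counit_prod_one_add_Esh_mul_Dlt, one_smul] at h
    exact degreeLT_mono totalDegree_vandQ_le h
  have halt : ∀ i j, i ≠ j → rename (Equiv.swap i j) (opApply T (vandQ n) - vandQ n) =
      -(opApply T (vandQ n) - vandQ n) := by
    intro i j hij
    have hV : rename (Equiv.swap i j) (vandQ n) = -vandQ n := by
      rw [rename_vandQ, Equiv.Perm.sign_swap hij]
      simp
    rw [map_sub, ← opApply_permuteShifts_rename, permuteShifts_prod_one_add_Esh_mul_Dlt, hV,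
      opApply_neg, neg_sub', sub_neg_eq_add]
  exact sub_eq_zero.1 (eq_zero_of_rename_swap_of_mem_degreeLT halt hlow)

/-- Applying `∏_{1 ≤ p, q ≤ n} (id + E_{k_q} Δ_{k_p})` (over all ordered pairs) to
`∏_{1 ≤ i < j ≤ n} (k_j - k_i)/(j - i)` returns the same polynomial. -/
theorem full_operator_product_fixes_vandermonde (n : ℕ) (hn : 1 ≤ n) :
    opApply (∏ p ∈ (Finset.univ : Finset (Fin n × Fin n)), (1 + Esh p.2 * Dlt p.1))
        (vandQ n) = vandQ n :=
  full_operator_product_fixes_vandermonde_general n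
end

section
/- Let G(k_1, …, k_n) be a polynomial over ℂ and fix i with 1 ≤ i ≤ n − 1. Then the total degree of T_{k_i,k_{i+1}} G in the two variables (k_i, k_{i+1}) equals the total degree of T'_{k_i,k_{i+1}} G in (k_i, k_{i+1}); in particular, T_{k_i,k_{i+1}} G = 0 if and only if T'_{k_i,k_{i+1}} G = 0. -/
open MvPolynomial Finset

/-- The shift of a polynomial by an integer vector `a`:
`(shiftPolyC a p)(x₁,…,xₙ) = p(x₁ + a₁, …, xₙ + aₙ)`. -/
noncomputable def shiftPolyC {n : ℕ} (a : Fin n → ℤ) (p : MvPolynomial (Fin n) ℂ) :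
    MvPolynomial (Fin n) ℂ :=
  aeval (fun j => X j + C ((a j : ℂ))) p

/-- A Laurent polynomial `Q` in the commuting shift operators `E₁,…,Eₙ` (an element of the
group algebra `ℂ[ℤⁿ]`, the exponent vector recording the shift) acts on polynomials. -/
noncomputable def opApplyC {n : ℕ} (Q : AddMonoidAlgebra ℂ (Fin n → ℤ))
    (p : MvPolynomial (Fin n) ℂ) : MvPolynomial (Fin n) ℂ :=
  Q.coeff.sum fun a c => c • shiftPolyC a p

/-- The shift operator `E_{k_i}` as an element of the operator algebra. -/
noncomputable def EshC {n : ℕ} (i : Fin n) : AddMonoidAlgebra ℂ (Fin n → ℤ) :=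
  AddMonoidAlgebra.single (Pi.single i 1) 1

/-- The inverse shift operator `E_{k_i}⁻¹`. -/
noncomputable def EshInvC {n : ℕ} (i : Fin n) : AddMonoidAlgebra ℂ (Fin n → ℤ) :=
  AddMonoidAlgebra.single (Pi.single i (-1)) 1

/-- The difference operator `Δ_{k_i} = E_{k_i} - id`. -/
noncomputable def DltC {n : ℕ} (i : Fin n) : AddMonoidAlgebra ℂ (Fin n → ℤ) :=
  EshC i - 1

/-- `V_{k_i,k_j} = id + E_{k_i}⁻¹ Δ_{k_i} Δ_{k_j}`. -/
noncomputable def Vel {n : ℕ} (i j : Fin n) : AddMonoidAlgebra ℂ (Fin n → ℤ) :=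
  1 + EshInvC i * DltC i * DltC j

/-- The operator `T_{k_i,k_j} = (id + E_{k_j} E_{k_i}⁻¹ S_{k_i,k_j}) ∘ V_{k_i,k_j} ∘
(V_{k_i,k_j} + V_{k_j,k_i})⁻¹` (the swap `S` is realized by `rename (Equiv.swap i j)`,
and the inverse of `V + V` by `Function.invFun`, the operator being bijective). -/
noncomputable def Tbig {n : ℕ} (i j : Fin n) (G : MvPolynomial (Fin n) ℂ) :
    MvPolynomial (Fin n) ℂ :=
  let G2 := opApplyC (Vel i j) (Function.invFun (opApplyC (Vel i j + Vel j i)) G)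
  G2 + opApplyC (EshC j * EshInvC i) (rename (Equiv.swap i j) G2)

/-- The operator `T'_{k_i,k_j} = (id + S_{k_i,k_j})(id + E_{k_j} Δ_{k_i})`. -/
noncomputable def Tsml {n : ℕ} (i j : Fin n) (G : MvPolynomial (Fin n) ℂ) :
    MvPolynomial (Fin n) ℂ :=
  let H := opApplyC (1 + EshC j * DltC i) G
  H + rename (Equiv.swap i j) H

/-- The total degree of a polynomial in the two variables `k_i, k_j`. -/
noncomputable def degPair {n : ℕ} (i j : Fin n) (p : MvPolynomial (Fin n) ℂ) : ℕ :=
  p.support.sup fun m => m i + m j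

/-!
The shift operators form the group algebra `ℂ[ℤⁿ]`, acting on polynomials. If the augmentation
`ε(Q)` (the sum of the coefficients of `Q`) is nonzero, then at every monomial that is maximal in
the support of `p` for the componentwise order, `Q p` has `ε(Q)` times the coefficient of `p`.
Choosing such a monomial of top degree in `(k_i, k_j)` shows that `Q` preserves that degree and is
injective, hence bijective on each finite-dimensional space of polynomials of bounded degree; in
particular `W = V_{i,j} + V_{j,i}` is invertible. With `D = 1 + E_j Δ_i` and `D' = 1 + E_i Δ_j`,
the identity `D E_j E_i⁻¹ V_{j,i} = V_{i,j} D'` gives `W D D' (T G) = V_{i,j} D' (T' G)`, where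
`ε(W D D') = 2` and `ε(V_{i,j} D') = 1`.
-/

noncomputable section

section PointwiseMonic

variable {σ R : Type*} [CommSemiring R]

def IsPointwiseMonic (a : σ →₀ ℕ) (p : MvPolynomial σ R) : Prop :=
  (∀ m ∈ p.support, m ≤ a) ∧ coeff a p = 1

lemma isPointwiseMonic_one : IsPointwiseMonic 0 (1 : MvPolynomial σ R) :=
  ⟨fun _ hm => (Finset.mem_singleton.mp (support_monomial_subset hm)).le, coeff_zero_one⟩

lemma isPointwiseMonic_X_add_C (l : σ) (c : R) :
    IsPointwiseMonic (Finsupp.single l 1) (X l + C c : MvPolynomial σ R) := by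
  classical
  refine ⟨fun m hm => ?_, ?_⟩
  · rcases Finset.mem_union.mp (support_add hm) with h | h
    · exact (Finset.mem_singleton.mp (support_monomial_subset h)).le
    · exact (Finset.mem_singleton.mp (support_monomial_subset h)).trans_le zero_le
  · rw [coeff_add, coeff_X, coeff_C, if_neg (Finsupp.single_ne_zero.mpr one_ne_zero).symm,
      add_zero, if_pos rfl]

lemma IsPointwiseMonic.mul {a b : σ →₀ ℕ} {p q : MvPolynomial σ R}
    (hp : IsPointwiseMonic a p) (hq : IsPointwiseMonic b q) :
    IsPointwiseMonic (a + b) (p * q) := by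
  classical
  refine ⟨fun m hm => ?_, ?_⟩
  · obtain ⟨x, hx, y, hy, rfl⟩ := Finset.mem_add.mp (support_mul p q hm)
    exact add_le_add (hp.1 x hx) (hq.1 y hy)
  · rw [coeff_mul, Finset.sum_eq_single (a, b), hp.2, hq.2, one_mul]
    · rintro ⟨x, y⟩ hxy hne
      rw [Finset.HasAntidiagonal.mem_antidiagonal] at hxy
      by_contra h
      have hx := hp.1 x (mem_support_iff.mpr (left_ne_zero_of_mul h))
      have hy := hq.1 y (mem_support_iff.mpr (right_ne_zero_of_mul h))
      obtain ⟨rfl, rfl⟩ := (add_eq_add_iff_eq_and_eq hx hy).mp hxy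
      exact hne rfl
    · simp

lemma IsPointwiseMonic.pow {a : σ →₀ ℕ} {p : MvPolynomial σ R} (hp : IsPointwiseMonic a p)
    (e : ℕ) : IsPointwiseMonic (e • a) (p ^ e) := by
  induction e with
  | zero => simpa using isPointwiseMonic_one
  | succ e ih => simpa [pow_succ, succ_nsmul] using ih.mul hp

lemma isPointwiseMonic_prod_X_add_C_pow (c : σ → R) (d : σ →₀ ℕ) :
    IsPointwiseMonic d (d.prod fun l e => (X l + C (c l)) ^ e) := by
  classical
  induction d using Finsupp.induction with
  | zero => simpa using isPointwiseMonic_one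
  | single_add l e d _ _ ih =>
    rw [Finsupp.prod_add_index (fun _ _ => pow_zero _) (fun _ _ _ _ => pow_add _ _ _),
      Finsupp.prod_single_index (h := fun l e => (X l + C (c l)) ^ e) (pow_zero _)]
    simpa using ((isPointwiseMonic_X_add_C l (c l)).pow e).mul ih

end PointwiseMonic

variable {n : ℕ}

lemma shiftPolyC_zero (p : MvPolynomial (Fin n) ℂ) : shiftPolyC 0 p = p := by
  simp [shiftPolyC]

lemma shiftPolyC_shiftPolyC (a b : Fin n → ℤ) (p : MvPolynomial (Fin n) ℂ) :
    shiftPolyC a (shiftPolyC b p) = shiftPolyC (a + b) p := by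
  simp only [shiftPolyC, aeval_eq_bind₁, bind₁_bind₁]
  congr 2 with l
  simp only [bind₁_X_right, map_add, bind₁_C_right, Pi.add_apply, Int.cast_add, add_assoc]

lemma isPointwiseMonic_shiftPolyC_monomial (a : Fin n → ℤ) (d : Fin n →₀ ℕ) :
    IsPointwiseMonic d (shiftPolyC a (monomial d (1 : ℂ))) := by
  rw [shiftPolyC, aeval_monomial, map_one, one_mul]
  exact isPointwiseMonic_prod_X_add_C_pow (fun l => ((a l : ℤ) : ℂ)) d

lemma shiftPolyC_eq_sum (a : Fin n → ℤ) (p : MvPolynomial (Fin n) ℂ) :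
    shiftPolyC a p = ∑ d ∈ p.support, coeff d p • shiftPolyC a (monomial d 1) := by
  conv_lhs => rw [p.as_sum]
  simp only [shiftPolyC, map_sum, ← map_smul, smul_eq_mul, mul_one]

lemma exists_le_of_mem_support_shiftPolyC {a : Fin n → ℤ} {p : MvPolynomial (Fin n) ℂ}
    {m : Fin n →₀ ℕ} (hm : m ∈ (shiftPolyC a p).support) : ∃ d ∈ p.support, m ≤ d := by
  rw [mem_support_iff, shiftPolyC_eq_sum, coeff_sum] at hm
  obtain ⟨d, hd, hne⟩ := Finset.exists_ne_zero_of_sum_ne_zero hm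
  rw [coeff_smul] at hne
  exact ⟨d, hd, (isPointwiseMonic_shiftPolyC_monomial a d).1 m
    (mem_support_iff.mpr (right_ne_zero_of_smul hne))⟩

lemma coeff_shiftPolyC_of_maximal {a : Fin n → ℤ} {p : MvPolynomial (Fin n) ℂ}
    {m : Fin n →₀ ℕ} (hm : ∀ d ∈ p.support, m ≤ d → d = m) :
    coeff m (shiftPolyC a p) = coeff m p := by
  have hlower : ∀ d ∈ p.support, d ≠ m →
      coeff m (coeff d p • shiftPolyC a (monomial d (1 : ℂ))) = 0 := by
    intro d hd hdm
    by_contra h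
    rw [coeff_smul] at h
    exact hdm (hm d hd ((isPointwiseMonic_shiftPolyC_monomial a d).1 m
      (mem_support_iff.mpr (right_ne_zero_of_smul h))))
  rw [shiftPolyC_eq_sum, coeff_sum, Finset.sum_eq_single m hlower
    (fun hmp => by rw [notMem_support_iff.mp hmp, zero_smul, coeff_zero]), coeff_smul,
    (isPointwiseMonic_shiftPolyC_monomial a m).2, smul_eq_mul, mul_one]

def shiftRep (n : ℕ) : Multiplicative (Fin n → ℤ) →* Module.End ℂ (MvPolynomial (Fin n) ℂ) where
  toFun a := (aeval fun j => X j + C ((a.toAdd j : ℂ))).toLinearMap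
  map_one' := LinearMap.ext shiftPolyC_zero
  map_mul' a b := LinearMap.ext fun p => (shiftPolyC_shiftPolyC a.toAdd b.toAdd p).symm

def opAlgHom (n : ℕ) :
    AddMonoidAlgebra ℂ (Fin n → ℤ) →ₐ[ℂ] Module.End ℂ (MvPolynomial (Fin n) ℂ) :=
  AddMonoidAlgebra.lift ℂ _ (Fin n → ℤ) (shiftRep n)

lemma opAlgHom_apply (Q : AddMonoidAlgebra ℂ (Fin n → ℤ)) (p : MvPolynomial (Fin n) ℂ) :
    opAlgHom n Q p = opApplyC Q p := by
  rw [opAlgHom, AddMonoidAlgebra.lift_apply, opApplyC, Finsupp.sum, Finsupp.sum,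
    LinearMap.coe_sum, Finset.sum_apply]
  rfl

lemma opApplyC_mul (P Q : AddMonoidAlgebra ℂ (Fin n → ℤ)) (p : MvPolynomial (Fin n) ℂ) :
    opApplyC (P * Q) p = opApplyC P (opApplyC Q p) := by
  simp only [← opAlgHom_apply, map_mul, Module.End.mul_apply]

lemma opApplyC_add_right (Q : AddMonoidAlgebra ℂ (Fin n → ℤ)) (p q : MvPolynomial (Fin n) ℂ) :
    opApplyC Q (p + q) = opApplyC Q p + opApplyC Q q := by
  simp only [← opAlgHom_apply, map_add]

def augmentation (n : ℕ) : AddMonoidAlgebra ℂ (Fin n → ℤ) →ₐ[ℂ] ℂ :=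
  AddMonoidAlgebra.lift ℂ ℂ (Fin n → ℤ) 1

lemma augmentation_apply (Q : AddMonoidAlgebra ℂ (Fin n → ℤ)) :
    augmentation n Q = Q.coeff.sum fun _ c => c := by
  simp [augmentation, AddMonoidAlgebra.lift_apply]

lemma augmentation_single (a : Fin n → ℤ) (c : ℂ) :
    augmentation n (AddMonoidAlgebra.single a c) = c := by
  simp [augmentation, AddMonoidAlgebra.lift_single]

lemma augmentation_DltC (k : Fin n) : augmentation n (DltC k) = 0 := by
  simp [DltC, EshC, augmentation_single]

lemma augmentation_Vel (k l : Fin n) : augmentation n (Vel k l) = 1 := by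
  simp [Vel, augmentation_DltC]

lemma coeff_opApplyC (Q : AddMonoidAlgebra ℂ (Fin n → ℤ)) (p : MvPolynomial (Fin n) ℂ)
    (m : Fin n →₀ ℕ) :
    coeff m (opApplyC Q p) = Q.coeff.sum fun a c => c * coeff m (shiftPolyC a p) := by
  simp only [opApplyC, Finsupp.sum, coeff_sum, coeff_smul, smul_eq_mul]

lemma exists_le_of_mem_support_opApplyC {Q : AddMonoidAlgebra ℂ (Fin n → ℤ)}
    {p : MvPolynomial (Fin n) ℂ} {m : Fin n →₀ ℕ} (hm : m ∈ (opApplyC Q p).support) :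
    ∃ d ∈ p.support, m ≤ d := by
  rw [mem_support_iff, coeff_opApplyC] at hm
  obtain ⟨a, -, hne⟩ := Finset.exists_ne_zero_of_sum_ne_zero hm
  exact exists_le_of_mem_support_shiftPolyC (mem_support_iff.mpr (right_ne_zero_of_mul hne))

lemma coeff_opApplyC_of_maximal (Q : AddMonoidAlgebra ℂ (Fin n → ℤ))
    {p : MvPolynomial (Fin n) ℂ} {m : Fin n →₀ ℕ} (hm : ∀ d ∈ p.support, m ≤ d → d = m) :
    coeff m (opApplyC Q p) = augmentation n Q * coeff m p := by
  simp only [coeff_opApplyC, coeff_shiftPolyC_of_maximal hm, augmentation_apply, Finsupp.sum,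
    Finset.sum_mul]

lemma le_degPair (i j : Fin n) {p : MvPolynomial (Fin n) ℂ} {m : Fin n →₀ ℕ}
    (hm : m ∈ p.support) : m i + m j ≤ degPair i j p :=
  Finset.le_sup (f := fun m => m i + m j) hm

lemma degPair_opApplyC_le (i j : Fin n) (Q : AddMonoidAlgebra ℂ (Fin n → ℤ))
    (p : MvPolynomial (Fin n) ℂ) : degPair i j (opApplyC Q p) ≤ degPair i j p := by
  refine Finset.sup_le fun m hm => ?_
  obtain ⟨d, hd, hmd⟩ := exists_le_of_mem_support_opApplyC hm
  exact (add_le_add (hmd i) (hmd j)).trans (le_degPair i j hd)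

lemma exists_maximal_degPair (i j : Fin n) {p : MvPolynomial (Fin n) ℂ} (hp : p ≠ 0) :
    ∃ m ∈ p.support, m i + m j = degPair i j p ∧ ∀ d ∈ p.support, m ≤ d → d = m := by
  classical
  obtain ⟨m₀, hm₀, hm₀deg⟩ :=
    Finset.exists_mem_eq_sup p.support (support_nonempty.mpr hp) fun m => m i + m j
  obtain ⟨m, hmax⟩ := Finset.exists_maximal
    (s := p.support.filter fun m => m i + m j = degPair i j p)
    ⟨m₀, Finset.mem_filter.mpr ⟨hm₀, hm₀deg.symm⟩⟩
  obtain ⟨hm, hmdeg⟩ := Finset.mem_filter.mp hmax.prop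
  refine ⟨m, hm, hmdeg, fun d hd hmd => (hmax.eq_of_le ?_ hmd).symm⟩
  exact Finset.mem_filter.mpr ⟨hd, le_antisymm (le_degPair i j hd)
    (hmdeg ▸ add_le_add (hmd i) (hmd j))⟩

section Nondegenerate

variable {Q : AddMonoidAlgebra ℂ (Fin n → ℤ)}

lemma degPair_opApplyC (hQ : augmentation n Q ≠ 0) (i j : Fin n)
    (p : MvPolynomial (Fin n) ℂ) :
    degPair i j (opApplyC Q p) = degPair i j p := by
  refine le_antisymm (degPair_opApplyC_le i j Q p) ?_
  rcases eq_or_ne p 0 with rfl | hp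
  · exact zero_le
  obtain ⟨m, hm, hmdeg, hmax⟩ := exists_maximal_degPair i j hp
  have hcoeff : m ∈ (opApplyC Q p).support := by
    rw [mem_support_iff, coeff_opApplyC_of_maximal Q hmax]
    exact mul_ne_zero hQ (mem_support_iff.mp hm)
  exact hmdeg ▸ le_degPair i j hcoeff

lemma opApplyC_eq_zero_iff (hQ : augmentation n Q ≠ 0) {p : MvPolynomial (Fin n) ℂ} :
    opApplyC Q p = 0 ↔ p = 0 := by
  refine ⟨fun h => ?_, fun h => by rw [h, ← opAlgHom_apply, map_zero]⟩
  by_contra hp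
  obtain ⟨m, hmax⟩ := Finset.exists_maximal (support_nonempty.mpr hp)
  have := coeff_opApplyC_of_maximal Q fun d hd hmd => (hmax.eq_of_le hd hmd).symm
  rw [h, coeff_zero] at this
  exact mul_ne_zero hQ (mem_support_iff.mp hmax.prop) this.symm

lemma opApplyC_surjective (hQ : augmentation n Q ≠ 0) : Function.Surjective (opApplyC Q) := by
  intro G
  obtain ⟨N, hG⟩ : ∃ N, G ∈ restrictDegree (Fin n) ℂ N :=
    ⟨_, restrictTotalDegree_le_restrictDegree _ _ _ ((mem_restrictTotalDegree _ _ _).mpr le_rfl)⟩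
  have hmaps : ∀ p ∈ restrictDegree (Fin n) ℂ N, opAlgHom n Q p ∈ restrictDegree (Fin n) ℂ N := by
    simp only [mem_restrictDegree, opAlgHom_apply]
    intro p hp s hs l
    obtain ⟨d, hd, hsd⟩ := exists_le_of_mem_support_opApplyC hs
    exact (hsd l).trans (hp d hd l)
  have hinj : Function.Injective ((opAlgHom n Q).restrict hmaps) := by
    refine (injective_iff_map_eq_zero _).mpr fun p hp => Subtype.ext ?_
    exact (opApplyC_eq_zero_iff hQ).mp (by simpa [← opAlgHom_apply] using congrArg Subtype.val hp)
  obtain ⟨p, hp⟩ := LinearMap.injective_iff_surjective.mp hinj ⟨G, hG⟩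
  exact ⟨p, by simpa [← opAlgHom_apply] using congrArg Subtype.val hp⟩

end Nondegenerate

lemma rename_shiftPolyC (σ : Equiv.Perm (Fin n)) (a : Fin n → ℤ) (p : MvPolynomial (Fin n) ℂ) :
    rename σ (shiftPolyC a p) = shiftPolyC (a ∘ σ.symm) (rename σ p) := by
  rw [shiftPolyC, shiftPolyC, ← AlgHom.comp_apply, comp_aeval, aeval_rename]
  congr 2 with l
  simp

def permAlgEquiv (σ : Equiv.Perm (Fin n)) :
    AddMonoidAlgebra ℂ (Fin n → ℤ) ≃ₐ[ℂ] AddMonoidAlgebra ℂ (Fin n → ℤ) :=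
  AddMonoidAlgebra.domCongr ℂ ℂ (LinearEquiv.funCongrLeft ℤ ℤ σ.symm).toAddEquiv

lemma permAlgEquiv_single (σ : Equiv.Perm (Fin n)) (a : Fin n → ℤ) (c : ℂ) :
    permAlgEquiv σ (AddMonoidAlgebra.single a c) = AddMonoidAlgebra.single (a ∘ σ.symm) c :=
  AddMonoidAlgebra.domCongr_single _ _ _

lemma rename_opApplyC (σ : Equiv.Perm (Fin n)) (Q : AddMonoidAlgebra ℂ (Fin n → ℤ))
    (p : MvPolynomial (Fin n) ℂ) :
    rename σ (opApplyC Q p) = opApplyC (permAlgEquiv σ Q) (rename σ p) := by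
  have hcoeff : (permAlgEquiv σ Q).coeff =
      Finsupp.equivMapDomain (LinearEquiv.funCongrLeft ℤ ℤ σ.symm).toEquiv Q.coeff :=
    AddMonoidAlgebra.coeff_mapDomainRingEquiv _ _
  rw [opApplyC, opApplyC, hcoeff, Finsupp.sum_equivMapDomain, map_finsuppSum]
  refine Finsupp.sum_congr fun a _ => ?_
  rw [map_smul, rename_shiftPolyC]
  rfl

lemma permAlgEquiv_EshC (σ : Equiv.Perm (Fin n)) (k : Fin n) :
    permAlgEquiv σ (EshC k) = EshC (σ k) := by
  rw [EshC, permAlgEquiv_single, Pi.single_comp_equiv, Equiv.symm_symm, EshC]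

lemma permAlgEquiv_EshInvC (σ : Equiv.Perm (Fin n)) (k : Fin n) :
    permAlgEquiv σ (EshInvC k) = EshInvC (σ k) := by
  rw [EshInvC, permAlgEquiv_single, Pi.single_comp_equiv, Equiv.symm_symm, EshInvC]

lemma permAlgEquiv_DltC (σ : Equiv.Perm (Fin n)) (k : Fin n) :
    permAlgEquiv σ (DltC k) = DltC (σ k) := by
  rw [DltC, map_sub, map_one, permAlgEquiv_EshC, DltC]

lemma permAlgEquiv_Vel (σ : Equiv.Perm (Fin n)) (k l : Fin n) :
    permAlgEquiv σ (Vel k l) = Vel (σ k) (σ l) := by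
  simp only [Vel, map_add, map_one, map_mul, permAlgEquiv_EshInvC, permAlgEquiv_DltC]

lemma EshC_mul_EshInvC (k : Fin n) : EshC k * EshInvC k = 1 := by
  rw [EshC, EshInvC, AddMonoidAlgebra.single_mul_single, ← Pi.single_add, add_neg_cancel,
    Pi.single_zero, mul_one, AddMonoidAlgebra.one_def]

/-- With `u = E_i`, `v = E_j`, both sides equal `u⁻¹ (1 + uv - u) (1 + uv - v)`. -/
lemma one_add_EshC_mul_DltC_mul_Vel (i j : Fin n) :
    (1 + EshC j * DltC i) * (EshC j * EshInvC i) * Vel j i =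
      Vel i j * (1 + EshC i * DltC j) := by
  rw [Vel, Vel, DltC, DltC]
  linear_combination
    (1 + EshC i * EshC j - EshC j) * EshInvC i * (EshC j - 1) * (EshC i - 1) *
        EshC_mul_EshInvC j +
      (1 + EshC i * EshC j - EshC i) * EshC_mul_EshInvC i

lemma degPair_eq_and_eq_zero_iff_of_opApplyC_eq {P Q : AddMonoidAlgebra ℂ (Fin n → ℤ)}
    (hP : augmentation n P ≠ 0) (hQ : augmentation n Q ≠ 0) (i j : Fin n)
    {p q : MvPolynomial (Fin n) ℂ} (h : opApplyC P p = opApplyC Q q) :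
    degPair i j p = degPair i j q ∧ (p = 0 ↔ q = 0) := by
  rw [← degPair_opApplyC hP, h, degPair_opApplyC hQ, ← opApplyC_eq_zero_iff hP, h,
    opApplyC_eq_zero_iff hQ]
  exact ⟨rfl, Iff.rfl⟩

end

theorem T_and_T'_same_degree_general (n : ℕ) (G : MvPolynomial (Fin n) ℂ) (i j : Fin n) :
    degPair i j (Tbig i j G) = degPair i j (Tsml i j G) ∧
    (Tbig i j G = 0 ↔ Tsml i j G = 0) := by
  set W := Vel i j + Vel j i
  set D := 1 + EshC j * DltC i
  set D' := 1 + EshC i * DltC j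
  set s := rename (R := ℂ) (Equiv.swap i j)
  set H := Function.invFun (opApplyC W) G
  have hH : opApplyC W H = G :=
    Function.invFun_eq (opApplyC_surjective (by simp [W, augmentation_Vel]) G)
  have hTbig :
      Tbig i j G = opApplyC (Vel i j) H + opApplyC (EshC j * EshInvC i * Vel j i) (s H) := by
    rw [Tbig, opApplyC_mul _ (Vel j i), rename_opApplyC, permAlgEquiv_Vel,
      Equiv.swap_apply_left, Equiv.swap_apply_right]
  have hTsml : Tsml i j G = opApplyC (D * W) H + opApplyC (D' * W) (s H) := by
    rw [Tsml, ← hH, ← opApplyC_mul, rename_opApplyC, map_mul]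
    simp only [W, D, D', s, map_add, map_one, map_mul, permAlgEquiv_Vel, permAlgEquiv_EshC,
      permAlgEquiv_DltC, Equiv.swap_apply_left, Equiv.swap_apply_right, add_comm (Vel j i)]
  refine degPair_eq_and_eq_zero_iff_of_opApplyC_eq (P := W * D * D') (Q := Vel i j * D')
    (by simp [W, D, D', augmentation_Vel, augmentation_DltC])
    (by simp [D', augmentation_Vel, augmentation_DltC]) i j ?_
  rw [hTbig, hTsml, opApplyC_add_right, opApplyC_add_right, ← opApplyC_mul, ← opApplyC_mul,
    ← opApplyC_mul, ← opApplyC_mul]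
  refine congrArg₂ (· + ·) (congrArg (opApplyC · H) ?_) (congrArg (opApplyC · (s H)) ?_)
  · ring
  · linear_combination W * D' * one_add_EshC_mul_DltC_mul_Vel i j

/-- `T_{k_i,k_{i+1}} G` and `T'_{k_i,k_{i+1}} G` have the same total degree in the two
variables `(k_i, k_{i+1})`; in particular one vanishes iff the other does. -/
theorem T_and_T'_same_degree (n : ℕ) (G : MvPolynomial (Fin n) ℂ) (i j : Fin n)
    (hij : (i : ℕ) + 1 = (j : ℕ)) :
    degPair i j (Tbig i j G) = degPair i j (Tsml i j G) ∧
    (Tbig i j G = 0 ↔ Tsml i j G = 0) :=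
  T_and_T'_same_degree_general n G i j
end
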